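/- (Unboundedness of the Setting ALL radius for a family of smooth functions.) For ε > 0, define f_ε : ℝ² → ℝ by f_ε(x, y) = (x − y)² + ε(x² + y²). Then f_ε is convex, differentiable, smooth, and has (0, 0) as its unique minimizer; moreover, for the starting point x^(0) = (1, −1), there exists a point z ∈ ℝ² with f_ε(z) ≤ f_ε(x^(0)) and ‖z‖ ≥ 1/√ε. Consequently the radius R(x^(0)) := sup { ‖x − x*‖ : f(x) ≤ f(x^(0)), x* a minimizer } satisfies R(x^(0)) ≥ 1/√ε, which tends to infinity as ε → 0. -/

import Mathlib

open scoped RealInnerProductSpace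

noncomputable section

/-- The family `f_ε(x, y) = (x - y)² + ε(x² + y²)` on `ℝ²` (with the Euclidean norm). -/
def fEps (ε : ℝ) : EuclideanSpace ℝ (Fin 2) → ℝ :=
  fun v => (v 0 - v 1) ^ 2 + ε * ((v 0) ^ 2 + (v 1) ^ 2)

/-- The starting point `x⁽⁰⁾ = (1, -1)`. -/
def startPt : EuclideanSpace ℝ (Fin 2) := (WithLp.equiv 2 (Fin 2 → ℝ)).symm ![1, -1]

/-- The (explicit) gradient of `fEps ε`. -/
def gradVec (ε : ℝ) (x : EuclideanSpace ℝ (Fin 2)) : EuclideanSpace ℝ (Fin 2) :=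
  (WithLp.equiv 2 (Fin 2 → ℝ)).symm
    ![2 * (x 0 - x 1) + 2 * ε * x 0, -(2 * (x 0 - x 1)) + 2 * ε * x 1]

lemma hasGradAt (ε : ℝ) (x : EuclideanSpace ℝ (Fin 2)) :
    HasGradientAt (fEps ε) (gradVec ε x) x := by
  have p0 := (EuclideanSpace.proj (𝕜 := ℝ) (0 : Fin 2)).hasFDerivAt (x := x)
  have p1 := (EuclideanSpace.proj (𝕜 := ℝ) (1 : Fin 2)).hasFDerivAt (x := x)
  have hsub : HasFDerivAt (fun v : EuclideanSpace ℝ (Fin 2) => v 0 - v 1)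
      (EuclideanSpace.proj (0 : Fin 2) - EuclideanSpace.proj (1 : Fin 2)) x := p0.sub p1
  have hA : HasFDerivAt (fun v : EuclideanSpace ℝ (Fin 2) => (v 0 - v 1) ^ 2)
      ((2 * (x 0 - x 1)) • (EuclideanSpace.proj (𝕜 := ℝ) (0:Fin 2) -
        EuclideanSpace.proj (1 : Fin 2))) x := by
    have h2 : HasFDerivAt (fun v : EuclideanSpace ℝ (Fin 2) =>
        (v 0 - v 1) * (v 0 - v 1)) _ x := hsub.mul hsub
    simp only [← sq] at h2
    refine h2.congr_fderiv ?_
    ext v; simp [EuclideanSpace.proj]; ring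
  have h0 : HasFDerivAt (fun v : EuclideanSpace ℝ (Fin 2) => (v 0) ^ 2)
      ((2 * x 0) • EuclideanSpace.proj (𝕜 := ℝ) (0:Fin 2)) x := by
    have h2 : HasFDerivAt (fun v : EuclideanSpace ℝ (Fin 2) => (v 0) * (v 0)) _ x := p0.mul p0
    simp only [← sq] at h2
    refine h2.congr_fderiv ?_
    ext v; simp [EuclideanSpace.proj]; ring
  have h1 : HasFDerivAt (fun v : EuclideanSpace ℝ (Fin 2) => (v 1) ^ 2)
      ((2 * x 1) • EuclideanSpace.proj (𝕜 := ℝ) (1:Fin 2)) x := by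
    have h2 : HasFDerivAt (fun v : EuclideanSpace ℝ (Fin 2) => (v 1) * (v 1)) _ x := p1.mul p1
    simp only [← sq] at h2
    refine h2.congr_fderiv ?_
    ext v; simp [EuclideanSpace.proj]; ring
  have hB := (h0.add h1).const_mul ε
  have hF : HasFDerivAt (fEps ε) _ x := hA.add hB
  rw [hasGradientAt_iff_hasFDerivAt]
  refine hF.congr_fderiv ?_
  ext v
  simp [gradVec, InnerProductSpace.toDual, PiLp.inner_apply, Fin.sum_univ_two,
    EuclideanSpace.proj]
  ring

/-- Unboundedness of the Setting ALL radius for the family `f_ε`: `f_ε` is convex,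
differentiable and smooth with unique minimizer `(0,0)`, yet for `x⁽⁰⁾ = (1,-1)` there is a
point `z` of the initial sublevel set with `‖z - (0,0)‖ ≥ 1/√ε`; consequently every valid
radius `R(x⁽⁰⁾)` (any upper bound on distances from the sublevel set to the minimizer)
is at least `1/√ε`, which tends to infinity as `ε → 0`. -/
theorem settingALL_radius_unbounded (ε : ℝ) (hε : 0 < ε) :
    ConvexOn ℝ Set.univ (fEps ε) ∧
    Differentiable ℝ (fEps ε) ∧
    (∃ M : ℝ, ∀ x h : EuclideanSpace ℝ (Fin 2),
      ‖gradient (fEps ε) (x + h) - gradient (fEps ε) x‖ ≤ M * ‖h‖) ∧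
    (∀ y, fEps ε 0 ≤ fEps ε y) ∧
    (∀ z : EuclideanSpace ℝ (Fin 2), (∀ y, fEps ε z ≤ fEps ε y) → z = 0) ∧
    (∃ z : EuclideanSpace ℝ (Fin 2),
      fEps ε z ≤ fEps ε startPt ∧ 1 / Real.sqrt ε ≤ ‖z - (0 : EuclideanSpace ℝ (Fin 2))‖) ∧
    (∀ C : ℝ, (∀ w : EuclideanSpace ℝ (Fin 2),
        fEps ε w ≤ fEps ε startPt → ‖w - (0 : EuclideanSpace ℝ (Fin 2))‖ ≤ C) →
      1 / Real.sqrt ε ≤ C) := by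
  have hgrad : ∀ x, gradient (fEps ε) x = gradVec ε x := fun x => (hasGradAt ε x).gradient
  have hε' := hε.le
  have hsq : 0 < Real.sqrt ε := Real.sqrt_pos.mpr hε
  set c : ℝ := 1 / Real.sqrt ε with hc
  have hc0 : 0 ≤ c := by positivity
  have hcsq : ε * c ^ 2 = 1 := by
    rw [hc, div_pow, one_pow, Real.sq_sqrt hε.le]
    field_simp
  have hzdef : ∃ z : EuclideanSpace ℝ (Fin 2),
      fEps ε z ≤ fEps ε startPt ∧ 1 / Real.sqrt ε ≤ ‖z - (0 : EuclideanSpace ℝ (Fin 2))‖ := by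
    refine ⟨(WithLp.equiv 2 (Fin 2 → ℝ)).symm ![c, c], ?_, ?_⟩
    · have h1 : fEps ε ((WithLp.equiv 2 (Fin 2 → ℝ)).symm ![c, c]) = 2 := by
        simp [fEps]; nlinarith
      have h2 : fEps ε startPt = 4 + ε * 2 := by simp [fEps, startPt]; ring
      rw [h1, h2]; nlinarith
    · rw [sub_zero, EuclideanSpace.norm_eq]
      rw [show ∑ i : Fin 2,
          ‖((WithLp.equiv 2 (Fin 2 → ℝ)).symm ![c, c] : EuclideanSpace ℝ (Fin 2)) i‖ ^ 2
          = c ^ 2 + c ^ 2 by simp [Fin.sum_univ_two]]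
      rw [Real.le_sqrt hc0]
      · nlinarith [sq_nonneg c]
      · positivity
  refine ⟨?_, ?_, ?_, ?_, ?_, hzdef, ?_⟩
  · refine ⟨convex_univ, fun x _ y _ a b ha hb hab => ?_⟩
    simp only [fEps, PiLp.add_apply, PiLp.smul_apply, smul_eq_mul]
    have hb' : b = 1 - a := by linarith
    subst hb'
    nlinarith [mul_nonneg (mul_nonneg ha hb) (sq_nonneg ((x 0 - x 1) - (y 0 - y 1))),
      mul_nonneg hε.le (mul_nonneg (mul_nonneg ha hb) (sq_nonneg (x 0 - y 0))),
      mul_nonneg hε.le (mul_nonneg (mul_nonneg ha hb) (sq_nonneg (x 1 - y 1)))]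
  · exact fun x => ((hasGradAt ε x).hasFDerivAt.differentiableAt : DifferentiableAt ℝ (fEps ε) x)
  · refine ⟨4 + 2 * ε, fun x h => ?_⟩
    rw [hgrad, hgrad]
    have hxh0 : (x + h) 0 = x 0 + h 0 := rfl
    have hxh1 : (x + h) 1 = x 1 + h 1 := rfl
    set w := gradVec ε (x + h) - gradVec ε x with hw
    have hw0 : w 0 = 2 * (h 0 - h 1) + 2 * ε * h 0 := by
      simp [hw, gradVec, hxh0, hxh1]; ring
    have hw1 : w 1 = -(2 * (h 0 - h 1)) + 2 * ε * h 1 := by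
      simp [hw, gradVec, hxh0, hxh1]; ring
    have hM : (0:ℝ) ≤ 4 + 2 * ε := by linarith
    rw [EuclideanSpace.norm_eq, EuclideanSpace.norm_eq]
    rw [← Real.sqrt_sq hM, ← Real.sqrt_mul (sq_nonneg _)]
    apply Real.sqrt_le_sqrt
    simp only [Fin.sum_univ_two, Real.norm_eq_abs, sq_abs, hw0, hw1]
    nlinarith [sq_nonneg (h 0 - h 1), sq_nonneg (h 0 + h 1), sq_nonneg (h 0), sq_nonneg (h 1),
      mul_nonneg hε' (sq_nonneg (h 0 - h 1)), mul_nonneg hε' (sq_nonneg (h 0 + h 1)),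
      mul_nonneg (mul_nonneg hε' hε') (sq_nonneg (h 0)),
      mul_nonneg (mul_nonneg hε' hε') (sq_nonneg (h 1)), sq_nonneg ε]
  · intro y
    have h0 : fEps ε 0 = 0 := by simp [fEps]
    rw [h0]
    have : (0:ℝ) ≤ (y 0 - y 1) ^ 2 + ε * ((y 0) ^ 2 + (y 1) ^ 2) := by positivity
    simpa [fEps] using this
  · intro z hz
    have h := hz 0
    have h0 : fEps ε 0 = 0 := by simp [fEps]
    rw [h0] at h
    simp only [fEps] at h
    have hs : (z 0) ^ 2 + (z 1) ^ 2 ≤ 0 := by nlinarith [sq_nonneg (z 0 - z 1)]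
    have h1 : z 0 = 0 := by nlinarith [sq_nonneg (z 0), sq_nonneg (z 1)]
    have h2 : z 1 = 0 := by nlinarith [sq_nonneg (z 0), sq_nonneg (z 1)]
    ext i
    fin_cases i <;> simpa
  · intro C hC
    obtain ⟨z, hz1, hz2⟩ := hzdef
    exact le_trans hz2 (hC z hz1)
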